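/- The function a ↦ ln(a!)/(a-1) is strictly increasing for integers a ≥ 2; equivalently, for every integer a ≥ 3, (a!)^{a-2} > ((a-1)!)^{a-1}. -/

import Mathlib

/-!
Comparing consecutive values, `ln (a!) / (a - 1) < ln ((a + 1)!) / a` amounts to
`(a!)^a < ((a + 1)!)^(a - 1)`, and after cancelling `(a!)^(a - 1)` against
`((a + 1)!)^(a - 1) = (a + 1)^(a - 1) (a!)^(a - 1)` to `a! < (a + 1)^(a - 1)`,
which follows by induction from `2! < 3`.
-/

open Nat Real

theorem Nat.factorial_lt_add_one_pow_sub_one {n : ℕ} (hn : 2 ≤ n) : n ! < (n + 1) ^ (n - 1) := by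
  induction n, hn using Nat.le_induction with
  | base => decide
  | succ n hn ih =>
    obtain ⟨k, rfl⟩ : ∃ k, n = k + 1 := ⟨n - 1, by omega⟩
    calc (k + 2)! = (k + 2) * (k + 1)! := rfl
      _ < (k + 2) * (k + 2) ^ k := Nat.mul_lt_mul_of_pos_left ih (by omega)
      _ = (k + 2) ^ (k + 1) := Nat.pow_succ'.symm
      _ ≤ (k + 3) ^ (k + 1) := Nat.pow_le_pow_left (by omega) _

theorem Nat.factorial_pow_lt_factorial_succ_pow {n : ℕ} (hn : 2 ≤ n) :
    n ! ^ n < (n + 1)! ^ (n - 1) := by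
  obtain ⟨k, rfl⟩ : ∃ k, n = k + 1 := ⟨n - 1, by omega⟩
  calc (k + 1)! ^ (k + 1) = (k + 1)! ^ k * (k + 1)! := Nat.pow_succ _ _
    _ < (k + 1)! ^ k * (k + 2) ^ k :=
        Nat.mul_lt_mul_of_pos_left (factorial_lt_add_one_pow_sub_one hn) (by positivity)
    _ = (k + 2)! ^ k := by rw [← mul_pow, mul_comm, ← factorial_succ]

theorem Real.log_factorial_div_lt_log_factorial_succ_div {n : ℕ} (hn : 2 ≤ n) :
    log (n ! : ℝ) / ((n : ℝ) - 1) < log ((n + 1)! : ℝ) / (((n + 1 : ℕ) : ℝ) - 1) := by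
  have hn_real : (2 : ℝ) ≤ n := by exact_mod_cast hn
  have hpow : (n ! : ℝ) ^ n < ((n + 1)! : ℝ) ^ (n - 1) := by
    exact_mod_cast factorial_pow_lt_factorial_succ_pow hn
  have hlog := log_lt_log (by positivity) hpow
  rw [log_pow, log_pow, Nat.cast_sub (by omega)] at hlog
  rw [div_lt_div_iff₀ (by linarith) (by push_cast; linarith)]
  push_cast at hlog ⊢
  linarith

theorem stmt_2 :
    (StrictMonoOn (fun a : ℕ => Real.log (Nat.factorial a) / ((a : ℝ) - 1))
      {a : ℕ | 2 ≤ a}) ∧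
    (∀ a : ℕ, 3 ≤ a →
      (Nat.factorial (a - 1)) ^ (a - 1) < (Nat.factorial a) ^ (a - 2)) := by
  refine ⟨strictMonoOn_of_lt_add_one Set.ordConnected_Ici
    fun n _ hn _ => log_factorial_div_lt_log_factorial_succ_div hn, fun a ha => ?_⟩
  obtain ⟨n, rfl⟩ : ∃ n, a = n + 1 := ⟨a - 1, by omega⟩
  exact factorial_pow_lt_factorial_succ_pow (by omega)
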